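/- Set β = 1. For all A, B ∈ {L, R}, every i ≥ 1 and every f ∈ R: Ĥ^A_i(R_{i+1}(Ĥ^B_{i+1} f)) = R_{i+1}(Ĥ^A_i(Ĥ^R_{i+1} f)) + R_i(Ĥ^A_{i+1}(Ĥ^L_{i+1} f)) + R_i(R_{i+2}(Ĥ^A_{i+1} f)). -/
import Mathlib


open MvPolynomial

/-- The ambient ring `R = ℤ[x₁, x₂, …]`, with variables indexed by positive integers. -/
abbrev MyR : Type := MvPolynomial ℕ+ ℤ

/-- The Bergeron–Sottile operator `R_i`: the `ℤ`-algebra map with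
`x_j ↦ x_j` for `j < i`, `x_i ↦ 0`, and `x_j ↦ x_{j-1}` for `j > i`. -/
noncomputable def BS (i : ℕ+) : MyR →ₐ[ℤ] MyR :=
  aeval fun j : ℕ+ =>
    if j < i then (X j : MyR) else if j = i then 0 else X (j - 1)

/-- Plane binary trees. -/
inductive BTree : Type
  | leaf : BTree
  | node : BTree → BTree → BTree
  deriving DecidableEq

namespace BTree

def numLeaves : BTree → ℕ+
  | leaf => 1
  | node l r => l.numLeaves + r.numLeaves

/-- Number of internal nodes. -/
def size : BTree → ℕ
  | leaf => 0
  | node l r => l.size + r.size + 1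

/-- `qdesSet T a` : the QDes positions contributed by a tree `T` whose leftmost
leaf carries the label `a` (leaves are labeled consecutively left-to-right). -/
def qdesSet : BTree → ℕ+ → Set ℕ+
  | leaf, _ => ∅
  | node leaf leaf, a => {a}
  | node l r, a => l.qdesSet a ∪ r.qdesSet (a + l.numLeaves)

/-- `trim T a i` : replace the terminal node whose leaf-children are labeled
`i`, `i+1` by a single leaf (`a` = label of the leftmost leaf of `T`). -/
def trim : BTree → ℕ+ → ℕ+ → BTree
  | leaf, _, _ => leaf
  | node l r, a, i =>
    if l = leaf ∧ r = leaf ∧ a = i then leaf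
    else node (l.trim a i) (r.trim (a + l.numLeaves) i)

/-- `rightAt T a i = true` iff the terminal node of `T` whose leaf-children are
labeled `i`, `i+1` is the right child of its parent. -/
def rightAt : BTree → ℕ+ → ℕ+ → Bool
  | leaf, _, _ => false
  | node l r, a, i =>
    l.rightAt a i || r.rightAt (a + l.numLeaves) i ||
      (decide (r = node leaf leaf) && decide (a + l.numLeaves = i))

end BTree

/-- An indexed forest: a sequence of plane binary trees, all but finitely many
of which are the single leaf. -/
structure IndexedForest : Type where
  trees : ℕ → BTree
  finite : {n : ℕ | trees n ≠ BTree.leaf}.Finite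

namespace IndexedForest

noncomputable def supp (F : IndexedForest) : Finset ℕ := F.finite.toFinset

/-- `|F|`, the number of internal nodes of `F`. -/
noncomputable def size (F : IndexedForest) : ℕ := ∑ n ∈ F.supp, (F.trees n).size

/-- The label of the leftmost leaf of the `n`-th tree (trees indexed from `0`;
leaves are labeled `1, 2, 3, …` from left to right across the trees). -/
def firstLeaf (F : IndexedForest) (n : ℕ) : ℕ+ :=
  ⟨1 + ∑ m ∈ Finset.range n, ((F.trees m).numLeaves : ℕ), by omega⟩

/-- `QDes(F)`. -/
def qdes (F : IndexedForest) : Set ℕ+ :=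
  ⋃ n : ℕ, (F.trees n).qdesSet (F.firstLeaf n)

/-- `F/i`, the forest obtained by replacing the terminal node with leaf-children
`i`, `i+1` by a single leaf. -/
def trim (F : IndexedForest) (i : ℕ+) : IndexedForest where
  trees := fun n => (F.trees n).trim (F.firstLeaf n) i
  finite := F.finite.subset (fun n hn => by
    simp only [Set.mem_setOf_eq] at hn ⊢
    intro h
    apply hn
    rw [h]
    rfl)

/-- The empty forest `∅`. -/
protected def empty : IndexedForest :=
  ⟨fun _ => BTree.leaf, Set.finite_empty.subset (fun _ hn => (hn rfl).elim)⟩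

/-- The terminal node of `F` at `i ∈ QDes F` is a right child. -/
def rightAt (F : IndexedForest) (i : ℕ+) : Prop :=
  ∃ n : ℕ, (F.trees n).rightAt (F.firstLeaf n) i = true

open Classical in
/-- `min QDes(F)` (defaulting to `1` if `QDes(F)` is empty, i.e. `F = ∅`). -/
noncomputable def minQDes (F : IndexedForest) : ℕ+ :=
  if h : ((fun i : ℕ+ => (i : ℕ)) '' F.qdes).Nonempty then
    ⟨sInf ((fun i : ℕ+ => (i : ℕ)) '' F.qdes), by
      obtain ⟨i, _, hieq⟩ := Nat.sInf_mem h
      exact hieq ▸ i.2⟩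
  else 1

end IndexedForest

/-- Set-valued labeled plane binary trees: each internal node carries a finite
set of positive integers. -/
inductive LTree : Type
  | leaf : LTree
  | node : Finset ℕ+ → LTree → LTree → LTree

namespace LTree

/-- Underlying unlabeled tree. -/
def shape : LTree → BTree
  | leaf => BTree.leaf
  | node _ l r => BTree.node l.shape r.shape

/-- The label set of the top of a subtree; a leaf with label `a` counts as the
singleton `{a}`. -/
def headSet : LTree → ℕ+ → Finset ℕ+
  | leaf, a => {a}
  | node S _ _, _ => S

/-- Compatibility of a set-valued labeling: every label set is nonempty,
`max κ(v) ≤ min κ(v_L)` and `max κ(v) < min κ(v_R)`.  The parameter `a` is the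
label of the leftmost leaf of the subtree. -/
def Compatible : LTree → ℕ+ → Prop
  | leaf, _ => True
  | node S l r, a =>
    S.Nonempty ∧ l.Compatible a ∧ r.Compatible (a + l.shape.numLeaves) ∧
    (∀ s ∈ S, ∀ t ∈ l.headSet a, s ≤ t) ∧
    (∀ s ∈ S, ∀ t ∈ r.headSet (a + l.shape.numLeaves), s < t)

/-- The monomial `x_κ` contributed by a labeled tree. -/
noncomputable def weight : LTree → MyR
  | leaf => 1
  | node S l r => (∏ j ∈ S, (X j : MyR)) * l.weight * r.weight

/-- `|κ|`, the total cardinality of the label sets. -/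
def lsize : LTree → ℕ
  | leaf => 0
  | node S l r => S.card + l.lsize + r.lsize

/-- All label sets are singletons. -/
def allSingle : LTree → Prop
  | leaf => True
  | node S l r => S.card = 1 ∧ l.allSingle ∧ r.allSingle

end LTree

/-- The type of compatible set-valued labelings of the indexed forest `F`. -/
def IndexedForest.Labelings (F : IndexedForest) : Type :=
  {κ : ℕ → LTree //
    (∀ n, (κ n).shape = F.trees n) ∧ ∀ n, (κ n).Compatible (F.firstLeaf n)}

/-- The grove polynomial `G_F^{(β)} = Σ_κ β^{|κ|-|F|} x_κ`. -/
noncomputable def groveP (β : ℤ) (F : IndexedForest) : MyR :=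
  ∑ᶠ κ : F.Labelings,
    C (β ^ ((∑ n ∈ F.supp, (κ.1 n).lsize) - F.size)) * ∏ n ∈ F.supp, (κ.1 n).weight

/-- The forest polynomial `𝔓_F`: the sum of `x_κ` over compatible set-valued
labelings all of whose label sets are singletons. -/
noncomputable def forestPoly (F : IndexedForest) : MyR :=
  ∑ᶠ κ : {κ : F.Labelings // ∀ n, (κ.1 n).allSingle},
    ∏ n ∈ F.supp, (κ.1.1 n).weight

open Classical in
/-- Fuel-indexed recursion implementing the grove extractor. -/
noncomputable def extractAux (T : ℕ+ → MyR → MyR) (β : ℤ) :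
    ℕ → IndexedForest → MyR → MyR
  | 0, _, f => f
  | k + 1, F, f =>
    if F = IndexedForest.empty then f
    else
      extractAux T β k (F.trim F.minQDes)
        (if F.rightAt F.minQDes then (1 + C β * X F.minQDes) * T F.minQDes f
         else T F.minQDes f)

/-- The grove extractor `Ĥ_F`: `Ĥ_∅ = id`, and for `F ≠ ∅` and `i = min QDes F`,
`Ĥ_F = Ĥ_{F/i} ∘ Ĥ^R_i` if the terminal node at `i` is a right child and
`Ĥ_F = Ĥ_{F/i} ∘ Ĥ^L_i` otherwise, where `Ĥ^L_i = T_i` and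
`Ĥ^R_i = (1 + βx_i)·T_i`.  (The recursion is implemented with fuel `|F|`, using
that `|F/i| = |F| - 1`.) -/
noncomputable def extract (T : ℕ+ → MyR → MyR) (β : ℤ) (F : IndexedForest) :
    MyR → MyR :=
  extractAux T β F.size F

/-- `S_∞`: permutations of `{1, 2, …}` fixing all but finitely many points. -/
def SPerm : Type := {w : Equiv.Perm ℕ+ // {x : ℕ+ | w x ≠ x}.Finite}

namespace SPerm

/-- The identity permutation. -/
protected def one : SPerm :=
  ⟨1, Set.finite_empty.subset (fun _ hx => (hx rfl).elim)⟩

/-- `w * s_i` where `s_i` is the transposition of `i` and `i+1`. -/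
noncomputable def mulSwap (w : SPerm) (i : ℕ+) : SPerm :=
  ⟨w.1 * Equiv.swap i (i + 1), by
    apply ((w.2.union (Set.finite_singleton i)).union
      (Set.finite_singleton (i + 1))).subset
    intro x hx
    simp only [Set.mem_setOf_eq, Equiv.Perm.mul_apply] at hx
    simp only [Set.mem_union, Set.mem_setOf_eq, Set.mem_singleton_iff]
    by_cases h1 : x = i
    · exact Or.inl (Or.inr h1)
    by_cases h2 : x = i + 1
    · exact Or.inr h2
    · exact Or.inl (Or.inl (by rwa [Equiv.swap_apply_of_ne_of_ne h1 h2] at hx))⟩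

/-- `ℓ(w)`, the number of inversions. -/
noncomputable def len (w : SPerm) : ℕ :=
  Set.ncard {p : ℕ+ × ℕ+ | p.1 < p.2 ∧ w.1 p.2 < w.1 p.1}

/-- `Des(w) = {i ≥ 1 : w(i) > w(i+1)}`. -/
def des (w : SPerm) : Set ℕ+ := {i : ℕ+ | w.1 (i + 1) < w.1 i}

end SPerm

/-- `f` is quasisymmetric in `x₁, …, xₙ`: no variable `x_j` with `j > n`
occurs, and coefficients of monomials with the same exponent word on strictly
increasing variable sequences in `{1, …, n}` agree. -/
def IsQuasisym (n : ℕ+) (f : MyR) : Prop :=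
  (∀ j : ℕ+, n < j → ∀ m ∈ f.support, m j = 0) ∧
  ∀ k : ℕ, 0 < k → ∀ a : Fin k → ℕ+, ∀ u v : Fin k → ℕ+,
    StrictMono u → StrictMono v → (∀ m, u m ≤ n) → (∀ m, v m ≤ n) →
    coeff (∑ m, Finsupp.single (u m) ((a m : ℕ))) f =
      coeff (∑ m, Finsupp.single (v m) ((a m : ℕ))) f

/-- The zigzag (chain) tree encoded by a list of booleans: the internal nodes
form a chain `v₁, …, v_k` (`k` = length + 1) and the `m`-th entry records
whether `v_{m+1}` is the right child of `v_m`. -/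
def chainTree : List Bool → BTree
  | [] => BTree.node BTree.leaf BTree.leaf
  | b :: rest =>
    if b then BTree.node BTree.leaf (chainTree rest)
    else BTree.node (chainTree rest) BTree.leaf

lemma BS_X (i j : ℕ+) : BS i (X j) = if j < i then (X j : MyR) else if j = i then 0 else X (j - 1) := by
  simp [BS]

lemma pnat_add_sub (i k : ℕ+) : (i + k) - k = i := by
  apply PNat.coe_injective
  rw [PNat.sub_coe]
  simp [PNat.lt_add_left k i]

lemma pnat_sub_one_coe {j : ℕ+} (h : (1:ℕ+) < j) : ((j - 1 : ℕ+) : ℕ) = (j : ℕ) - 1 := by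
  rw [PNat.sub_coe, if_pos h]; rfl

lemma BS_X_of_lt {i j : ℕ+} (h : j < i) : BS i (X j) = X j := by simp [BS_X, h]
lemma BS_X_self (i : ℕ+) : BS i (X i) = 0 := by simp [BS_X]
lemma BS_X_of_gt {i j : ℕ+} (h : i < j) : BS i (X j) = X (j - 1) := by
  simp [BS_X, h, not_lt_of_gt h, (ne_of_gt h : j ≠ i)]

lemma pnat_lt' {i : ℕ+} : i + 1 < i + 2 := by
  rw [← PNat.coe_lt_coe]; push_cast; omega

lemma BS_comp (i : ℕ+) (u : MyR) : BS i (BS (i+2) u) = BS (i+1) (BS i u) := by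
  have h : (BS i).comp (BS (i+2)) = (BS (i+1)).comp (BS i) := by
    apply MvPolynomial.algHom_ext
    intro j
    simp only [AlgHom.comp_apply]
    rcases lt_trichotomy j i with hj | rfl | hj
    · rw [BS_X_of_lt (hj.trans (PNat.lt_add_right i 2)), BS_X_of_lt hj,
        BS_X_of_lt (hj.trans (PNat.lt_add_right i 1))]
    · rw [BS_X_of_lt (PNat.lt_add_right _ 2), BS_X_self, map_zero]
    · rcases lt_trichotomy j (i+1) with hj1 | rfl | hj1
      · exact absurd (PNat.lt_add_one_iff.mp hj1) (not_le_of_gt hj)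
      · rw [BS_X_of_lt pnat_lt', BS_X_of_gt hj, pnat_add_sub i 1,
          BS_X_of_lt (PNat.lt_add_right i 1)]
      · rcases lt_trichotomy j (i+2) with hj2 | rfl | hj2
        · exact absurd (PNat.lt_add_one_iff.mp (by rwa [show i+2 = i+1+1 by ring] at hj2)) (not_le_of_gt hj1)
        · rw [BS_X_self, map_zero, BS_X_of_gt hj,
            show i+2-1 = i+1 by rw [show i+2 = i+1+1 by ring, pnat_add_sub (i+1) 1],
            BS_X_self]
        · have h1j : (1:ℕ+) < j := lt_trans (PNat.lt_add_left 1 i) (by rwa [show i+2 = i+1+1 by ring] at hj2)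
          have hij1 : i < j - 1 := by
            rw [← PNat.coe_lt_coe, pnat_sub_one_coe h1j]
            rw [← PNat.coe_lt_coe] at hj2; push_cast at hj2 ⊢; omega
          have hi1j1 : i + 1 < j - 1 := by
            rw [← PNat.coe_lt_coe, pnat_sub_one_coe h1j]
            rw [← PNat.coe_lt_coe] at hj2; push_cast at hj2 ⊢; omega
          rw [BS_X_of_gt hj2, BS_X_of_gt hij1,
            BS_X_of_gt hj, BS_X_of_gt hi1j1]
  exact congrFun (congrArg DFunLike.coe h) u

lemma BS_succ_X (i : ℕ+) : BS (i+1) (X i) = X i := BS_X_of_lt (PNat.lt_add_right i 1)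
lemma BS_X_succ (i : ℕ+) : BS i (X (i+1)) = X i := by
  rw [BS_X_of_gt (PNat.lt_add_right i 1), pnat_add_sub i 1]
lemma BS_succ2_X (i : ℕ+) : BS (i+2) (X (i+1)) = X (i+1) := BS_X_of_lt pnat_lt'

lemma key (T : ℕ+ → MyR → MyR)
    (hT : ∀ (i : ℕ+) (f : MyR), (X i : MyR) * T i f = BS (i + 1) f - BS i f)
    (i : ℕ+) (a a' : MyR) (ha1 : BS i a' = a) (ha2 : BS (i+1) a = a)
    (ha3 : BS (i+2) a' = a') (f : MyR) :
    a * T i (BS (i+1) (T (i+1) f)) =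
      BS (i+1) (a * T i ((1 + X (i+1)) * T (i+1) f)) +
      BS i (a' * T (i+1) (T (i+1) f)) +
      BS i (BS (i+2) (a' * T (i+1) f)) := by
  set t := T (i+1) f with htdef
  have hX : (X i : MyR) ≠ 0 := X_ne_zero i
  apply mul_left_cancel₀ hX
  have h1 := hT i (BS (i+1) t)
  have h2 := hT i ((1 + X (i+1)) * t)
  rw [map_mul, map_mul, map_add, map_add, map_one, map_one, BS_X_self, BS_X_succ] at h2
  have h2' := congrArg (BS (i+1)) h2
  simp only [map_mul, map_sub, map_add, map_one, map_zero, BS_succ_X, ha2, add_zero] at h2'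
  have h3 := hT (i+1) t
  have h3' := congrArg (BS i) h3
  rw [show i+1+1 = i+2 by ring] at h3'
  simp only [map_mul, map_sub, BS_X_succ, BS_comp] at h3'
  have h4 : BS i (BS (i+2) (a' * t)) = a * BS (i+1) (BS i t) := by
    rw [map_mul, ha3, map_mul, ha1, BS_comp]
  rw [map_mul (BS (i+1)), ha2, map_mul (BS i), ha1, h4]
  linear_combination a*h1 - a*h2' - a*h3'

/-- β = 1: the straightening relation
`Ĥ^A_i R_(i+1) Ĥ^B_(i+1) = R_(i+1) Ĥ^A_i Ĥ^R_(i+1) + R_i Ĥ^A_(i+1) Ĥ^L_(i+1)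
+ R_i R_(i+2) Ĥ^A_(i+1)` for `A, B ∈ {L, R}` (encoded as `false`/`true`). -/
theorem stmt8 (T : ℕ+ → MyR → MyR)
    (hT : ∀ (i : ℕ+) (f : MyR), (X i : MyR) * T i f = BS (i + 1) f - BS i f)
    (H : Bool → ℕ+ → MyR → MyR)
    (hHL : ∀ (i : ℕ+) (f : MyR), H false i f = T i f)
    (hHR : ∀ (i : ℕ+) (f : MyR), H true i f = (1 + X i) * T i f)
    (A B : Bool) (i : ℕ+) (f : MyR) :
    H A i (BS (i + 1) (H B (i + 1) f)) =
      BS (i + 1) (H A i (H true (i + 1) f)) +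
        BS i (H A (i + 1) (H false (i + 1) f)) +
        BS i (BS (i + 2) (H A (i + 1) f)) := by
  have hB : BS (i+1) (H B (i+1) f) = BS (i+1) (T (i+1) f) := by
    cases B
    · rw [hHL]
    · rw [hHR, map_mul, map_add, map_one, BS_X_self]
      simp
  rw [hB, hHR (i+1) f, hHL (i+1) f]
  cases A
  · simp only [hHL]
    simpa using key T hT i 1 1 (map_one _) (map_one _) (map_one _) f
  · simp only [hHR]
    exact key T hT i (1 + X i) (1 + X (i+1))
      (by rw [map_add, map_one, BS_X_succ])
      (by rw [map_add, map_one, BS_succ_X])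
      (by rw [map_add, map_one, BS_succ2_X]) f
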